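/- The CNESS definition violates Interventionism: in the causal model with binary endogenous variables A, C, D, F, E, equations E = F ∨ (¬A ∧ ¬D), F = D, D = C ∨ A, and a context u in which A=1 and C=1, it holds that C=1 CNESS-causes E=1 w.r.t. (M,u), yet there is no intervention on a subset of {A, D, F} under which E=1 is counterfactually dependent on C=1. -/

import Mathlib

/-!
Structural equation models (causal models) à la Pearl/Halpern, formalizing
Beckers' "The Counterfactual NESS Definition of Causation".

A causal model over a context type `Ctx` (settings of the exogenous variables),
endogenous variables `V` and values `Val` consists of finite nonempty ranges
`R X`, structural equations `F X`, and a strong-recursiveness (acyclicity)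
witness: an order `ord` such that `F X` only depends on variables of lower order.
-/

structure CausalModel (Ctx V Val : Type) where
  R : V → Finset Val
  R_nonempty : ∀ X, (R X).Nonempty
  F : V → Ctx → (V → Val) → Val
  ord : V → ℕ
  F_resp : ∀ X u s s', (∀ Y, ord Y < ord X → s Y = s' Y) → F X u s = F X u s'

namespace CausalModel

variable {Ctx V Val : Type}

/-- The unique solution of the equations in context `u` (it exists and is
unique by strong recursiveness). `(M,u) ⊨ X = x` iff `M.sol u X = x`. -/
noncomputable def sol (M : CausalModel Ctx V Val) (u : Ctx) : V → Val :=
  fun X =>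
    M.F X u (fun Y => if h : M.ord Y < M.ord X then M.sol u Y else (M.R_nonempty Y).choose)
termination_by X => M.ord X
decreasing_by exact h

/-- `M.sol u` indeed solves all the equations. -/
theorem sol_eq (M : CausalModel Ctx V Val) (u : Ctx) (X : V) :
    M.sol u X = M.F X u (M.sol u) := by
  rw [sol]
  exact M.F_resp X u _ _ (fun Y hY => dif_pos hY)

variable [DecidableEq V]

/-- `X⃗ = x⃗` (given by the set `Xs` and the assignment `xs`) is sufficient for
`E = e` w.r.t. `(M, u)`: the equation for `E` outputs `e` on every setting of the
endogenous variables (in their ranges) that agrees with `xs` on `Xs`. -/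
def Sufficient (M : CausalModel Ctx V Val) (u : Ctx) (Xs : Finset V) (xs : V → Val)
    (E : V) (e : Val) : Prop :=
  ∀ s : V → Val, (∀ Y, s Y ∈ M.R Y) → (∀ X ∈ Xs, s X = xs X) → M.F E u s = e

/-- The intervened model `M_{X⃗ ← x⃗}`: the equations of variables in `Xs` are
replaced by the constants given by `xs`. -/
def intervene (M : CausalModel Ctx V Val) (Xs : Finset V) (xs : V → Val) :
    CausalModel Ctx V Val where
  R := M.R
  R_nonempty := M.R_nonempty
  F := fun X u s => if X ∈ Xs then xs X else M.F X u s
  ord := M.ord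
  F_resp := by
    intro X u s s' h
    by_cases hX : X ∈ Xs
    · simp [hX]
    · simpa [hX] using M.F_resp X u s s' h

/-- `W⃗ = w⃗` (given by `Ws, ws`) is a witness for `C = c` directly NESS-causing
`E = e` w.r.t. `(M, u)`: `C = c` and `W⃗ = w⃗` actually hold, `{C = c} ∪ {W⃗ = w⃗}`
is sufficient for `E = e`, and `W⃗ = w⃗` alone is not. -/
def DirectNESSWith (M : CausalModel Ctx V Val) (u : Ctx) (C : V) (c : Val) (E : V) (e : Val)
    (Ws : Finset V) (ws : V → Val) : Prop :=
  M.sol u C = c ∧ (∀ W ∈ Ws, M.sol u W = ws W) ∧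
  M.Sufficient u (insert C Ws) (Function.update ws C c) E e ∧
  ¬ M.Sufficient u Ws ws E e

/-- `C = c` directly NESS-causes `E = e` w.r.t. `(M, u)`. -/
def DirectNESS (M : CausalModel Ctx V Val) (u : Ctx) (C : V) (c : Val) (E : V) (e : Val) :
    Prop :=
  ∃ (Ws : Finset V) (ws : V → Val), M.DirectNESSWith u C c E e Ws ws

/-- `C = c` NESS-causes `E = e` along the path `p = (C₁, …, Cₙ)` w.r.t. `(M, u)`:
there are values `c₁, …, cₙ` such that `C = c` directly NESS-causes `C₁ = c₁`, …,
and `Cₙ = cₙ` directly NESS-causes `E = e`. (A direct NESS-cause is a NESS-cause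
along the empty path.) -/
def NESSAlong (M : CausalModel Ctx V Val) (u : Ctx) (C : V) (c : Val) (p : List V)
    (E : V) (e : Val) : Prop :=
  ∃ cs : List Val, cs.length = p.length ∧
    List.Chain (fun a b => M.DirectNESS u a.1 a.2 b.1 b.2) (C, c) (p.zip cs ++ [(E, e)])

/-- `C = c` NESS-causes `E = e` w.r.t. `(M, u)`: there is a chain of direct
NESS-causes from `C = c` to `E = e`. -/
def NESS (M : CausalModel Ctx V Val) (u : Ctx) (C : V) (c : Val) (E : V) (e : Val) : Prop :=
  ∃ p : List V, M.NESSAlong u C c p E e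

/-- The BV definition: `C = c` NESS-causes `E = e` w.r.t. `(M, u)` and there is a
`c' ∈ R(C)` such that `C = c'` does not NESS-cause `E = e` w.r.t. `(M_{C ← c'}, u)`. -/
def BVCause (M : CausalModel Ctx V Val) (u : Ctx) (C : V) (c : Val) (E : V) (e : Val) :
    Prop :=
  M.NESS u C c E e ∧
    ∃ c' ∈ M.R C, ¬ (M.intervene {C} (fun _ => c')).NESS u C c' E e

/-- The CNESS definition: `C = c` NESS-causes `E = e` along some path `p` w.r.t.
`(M, u)` and there is a `c' ∈ R(C)` such that `C = c'` does not NESS-cause `E = e`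
along any subpath of `p` (a path all of whose variables are in `p`) w.r.t.
`(M_{C ← c'}, u)`. -/
def CNESSCause (M : CausalModel Ctx V Val) (u : Ctx) (C : V) (c : Val) (E : V) (e : Val) :
    Prop :=
  ∃ p : List V, M.NESSAlong u C c p E e ∧
    ∃ c' ∈ M.R C, ∀ p' : List V, (∀ X ∈ p', X ∈ p) →
      ¬ (M.intervene {C} (fun _ => c')).NESSAlong u C c' p' E e

/-- `E = e` is counterfactually dependent on `C = c` w.r.t. `(M, u)`:
`(M,u) ⊨ C = c ∧ E = e` and there is a `c' ∈ R(C)` with `(M,u) ⊨ [C ← c'] ¬(E = e)`. -/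
def CfDep (M : CausalModel Ctx V Val) (u : Ctx) (C : V) (c : Val) (E : V) (e : Val) : Prop :=
  M.sol u C = c ∧ M.sol u E = e ∧
    ∃ c' ∈ M.R C, (M.intervene {C} (fun _ => c')).sol u E ≠ e

/-- `E = e` is counterfactually dependent on `C = c` given the intervention
`X⃗ ← x⃗`: in `M_{X⃗ ← x⃗}` with context `u`, `C = c` and `E = e` hold, and there is
a `c' ∈ R(C)` such that additionally intervening with `C ← c'` makes `E = e` false. -/
def CfDepGiven (M : CausalModel Ctx V Val) (u : Ctx) (Xs : Finset V) (xs : V → Val)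
    (C : V) (c : Val) (E : V) (e : Val) : Prop :=
  (M.intervene Xs xs).sol u C = c ∧ (M.intervene Xs xs).sol u E = e ∧
    ∃ c' ∈ M.R C, ((M.intervene Xs xs).intervene {C} (fun _ => c')).sol u E ≠ e

/-- `Y` is a parent of `X`: the equation `F X` varies with the value of `Y`
for some context and some setting (within the ranges) of the other variables. -/
def Parent (M : CausalModel Ctx V Val) (Y X : V) : Prop :=
  ∃ (u : Ctx) (s : V → Val) (y y' : Val),
    (∀ Z, s Z ∈ M.R Z) ∧ y ∈ M.R Y ∧ y' ∈ M.R Y ∧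
    M.F X u (Function.update s Y y) ≠ M.F X u (Function.update s Y y')

end CausalModel
/-- Variables for the model with equations `E = F ∨ (¬A ∧ ¬D)`, `F = D`, `D = C ∨ A`. -/
inductive V5 | A | C | D | F | E
deriving DecidableEq

/-- The model with equations `E = F ∨ (¬A ∧ ¬D)`, `F = D`, `D = C ∨ A`,
in a context where `A = 1` and `C = 1`. -/
def M5 : CausalModel Unit V5 Bool where
  R := fun _ => Finset.univ
  R_nonempty := fun _ => Finset.univ_nonempty
  F := fun X _ s =>
    match X with
    | .A => true
    | .C => true
    | .D => s .C || s .A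
    | .F => s .D
    | .E => s .F || (!(s .A) && !(s .D))
  ord := fun X => match X with | .A => 0 | .C => 0 | .D => 1 | .F => 2 | .E => 3
  F_resp := by
    intro X u s s' h
    cases X
    · rfl
    · rfl
    · show (s V5.C || s V5.A) = (s' V5.C || s' V5.A)
      rw [h V5.C (by decide), h V5.A (by decide)]
    · show s V5.D = s' V5.D
      exact h V5.D (by decide)
    · show (s V5.F || (!(s V5.A) && !(s V5.D))) = (s' V5.F || (!(s' V5.A) && !(s' V5.D)))
      rw [h V5.A (by decide), h V5.D (by decide), h V5.F (by decide)]

/-!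
Each link of `C → D → F → E` is a direct NESS-cause with empty witness. Once `C ← 0`, the
variable `C` is no longer a parent of `F` or `E`, and it cannot directly NESS-cause `D` either:
with `C = 0` the equation of `D` reads `D = A`, so a witness either fixes `A = 1`, making `C`
superfluous, or leaves `A` free, in which case `C = 0` does not determine `D`. Hence no subpath of `[D, F]` carries a NESS chain.

Interventionism fails because `E` never depends on `C` once `C = 1` and `E = 1` hold: if neither
`D` nor `F` is fixed, `E = D ∨ ¬A = C ∨ A ∨ ¬A` is constantly `1`; if `D` is fixed, `C` no
longer reaches `E`; if only `F` is fixed, `E = 1` and `D = 1` force `F = 1`.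
-/

namespace CausalModel

variable {Ctx V Val : Type} [DecidableEq V] {M : CausalModel Ctx V Val} {u : Ctx}

theorem sol_intervene_of_mem {Xs : Finset V} {xs : V → Val} {X : V} (h : X ∈ Xs) :
    (M.intervene Xs xs).sol u X = xs X := by
  rw [sol_eq]
  exact if_pos h

theorem sol_intervene_of_not_mem {Xs : Finset V} {xs : V → Val} {X : V} (h : X ∉ Xs) :
    (M.intervene Xs xs).sol u X = M.F X u ((M.intervene Xs xs).sol u) := by
  rw [sol_eq]
  exact if_neg h

theorem intervene_intervene (Xs Ys : Finset V) (xs ys : V → Val) :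
    (M.intervene Xs xs).intervene Ys ys =
      M.intervene (Ys ∪ Xs) (fun X => if X ∈ Ys then ys X else xs X) := by
  simp only [intervene, mk.injEq, true_and, and_true]
  funext X u s
  by_cases hY : X ∈ Ys <;> by_cases hX : X ∈ Xs <;> simp [hY, hX]

theorem directNESS_of_sufficient_singleton {C E : V} {c e : Val} (hC : M.sol u C = c)
    (hsuff : ∀ s : V → Val, (∀ Y, s Y ∈ M.R Y) → s C = c → M.F E u s = e)
    (hnec : ∃ s : V → Val, (∀ Y, s Y ∈ M.R Y) ∧ M.F E u s ≠ e) :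
    M.DirectNESS u C c E e := by
  refine ⟨∅, fun _ => c, hC, by simp, fun s hs hsC => hsuff s hs ?_, ?_⟩
  · simpa using hsC C (Finset.mem_insert_self C ∅)
  · obtain ⟨s, hs, hne⟩ := hnec
    exact fun h => hne (h s hs (by simp))

theorem not_directNESS_of_not_parent {C T : V} {c t : Val} (hc : c ∈ M.R C)
    (hCT : ¬ M.Parent C T) : ¬ M.DirectNESS u C c T t := by
  rintro ⟨Ws, ws, -, -, hsuff, hnsuff⟩
  refine hnsuff fun s hs hW => ?_
  have hs' : ∀ Y, Function.update s C c Y ∈ M.R Y := by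
    intro Y
    by_cases hY : Y = C
    · subst hY; simpa using hc
    · simpa [hY] using hs Y
  have hagree : ∀ X ∈ insert C Ws, Function.update s C c X = Function.update ws C c X := by
    intro X hX
    by_cases hXC : X = C
    · subst hXC; simp
    · simpa [hXC] using hW X ((Finset.mem_insert.mp hX).resolve_left hXC)
  have hflip : M.F T u (Function.update s C c) = M.F T u (Function.update s C (s C)) :=
    by_contra fun h => hCT ⟨u, s, c, s C, hs, hc, hs C, h⟩
  rw [← hsuff _ hs' hagree, hflip, Function.update_eq_self]

theorem NESSAlong.exists_directNESS {C E : V} {c e : Val} {p : List V}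
    (h : M.NESSAlong u C c p E e) : ∃ X ∈ E :: p, ∃ x, M.DirectNESS u C c X x := by
  obtain ⟨cs, hlen, hchain⟩ := h
  match p, cs, hlen, hchain with
  | [], [], _, hchain => exact ⟨E, List.mem_cons_self, e, (List.isChain_cons_cons.mp hchain).1⟩
  | X :: _, x :: _, _, hchain =>
    exact ⟨X, by simp, x, (List.isChain_cons_cons.mp hchain).1⟩

end CausalModel

open CausalModel

theorem M5_sol_eq_true (X : V5) : M5.sol () X = true := by
  have hA : M5.sol () V5.A = true := by rw [sol_eq]; rfl
  have hC : M5.sol () V5.C = true := by rw [sol_eq]; rfl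
  have hD : M5.sol () V5.D = true := by
    rw [sol_eq]; show (M5.sol () V5.C || M5.sol () V5.A) = true; simp [hC]
  have hF : M5.sol () V5.F = true := by rw [sol_eq]; exact hD
  cases X
  · exact hA
  · exact hC
  · exact hD
  · exact hF
  · rw [sol_eq]; show (M5.sol () V5.F || _) = true; simp [hF]

theorem M5_nessAlong_C_D_F_E : M5.NESSAlong () V5.C true [V5.D, V5.F] V5.E true := by
  have hR : ∀ (s : V5 → Bool) Y, s Y ∈ M5.R Y := fun _ _ => Finset.mem_univ _
  refine ⟨[true, true], rfl, .cons_cons ?_ (.cons_cons ?_ (.cons_cons ?_ (.singleton _)))⟩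
  · refine directNESS_of_sufficient_singleton (M5_sol_eq_true _) ?_
      ⟨fun _ => false, hR _, by decide⟩
    intro s _ hC
    show (s V5.C || s V5.A) = true
    simp [hC]
  · exact directNESS_of_sufficient_singleton (M5_sol_eq_true _) (fun s _ hD => hD)
      ⟨fun _ => false, hR _, by decide⟩
  · refine directNESS_of_sufficient_singleton (M5_sol_eq_true _) ?_
      ⟨fun X => X = V5.A, hR _, by decide⟩
    intro s _ hF
    show (s V5.F || (!(s V5.A) && !(s V5.D))) = true
    simp [hF]

theorem M5_intervene_C_not_parent {xs : V5 → Bool} {X : V5} (hX : X = V5.F ∨ X = V5.E) :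
    ¬ (M5.intervene {V5.C} xs).Parent V5.C X := by
  rintro ⟨u, s, y, y', -, -, -, hne⟩
  rcases hX with rfl | rfl <;> simp [intervene, M5, Function.update] at hne

theorem M5_intervene_C_false_not_directNESS_D (t : Bool) :
    ¬ (M5.intervene {V5.C} (fun _ => false)).DirectNESS () V5.C false V5.D t := by
  rintro ⟨Ws, ws, -, hws, hsuff, hnsuff⟩
  have hFD : ∀ s, (M5.intervene {V5.C} (fun _ => false)).F V5.D () s = (s V5.C || s V5.A) :=
    fun _ => rfl
  by_cases hA : V5.A ∈ Ws
  · have hwA : ws V5.A = true := by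
      rw [← hws V5.A hA, sol_intervene_of_not_mem (by decide)]; rfl
    have ht : t = true := by
      rw [← hsuff _ (fun _ => Finset.mem_univ _) fun _ _ => rfl, hFD]
      simp [Function.update, hwA]
    refine hnsuff fun s _ hs => ?_
    rw [hFD, hs V5.A hA, hwA, ht, Bool.or_true]
  · have hvary : ∀ b, b = t := by
      intro b
      have h := hsuff (Function.update (Function.update ws V5.C false) V5.A b)
        (fun _ => Finset.mem_univ _) fun X hX => Function.update_of_ne (by grind) _ _
      simpa [hFD, Function.update] using h
    exact Bool.noConfusion ((hvary true).trans (hvary false).symm)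

theorem M5_intervene_C_sol_E_eq_true {Xs : Finset V5} {xs : V5 → Bool} (hE : V5.E ∉ Xs)
    (hC : (M5.intervene Xs xs).sol () V5.C = true)
    (h : (M5.intervene Xs xs).sol () V5.E = true) (c' : Bool) :
    ((M5.intervene Xs xs).intervene {V5.C} (fun _ => c')).sol () V5.E = true := by
  rw [intervene_intervene]
  set ys : V5 → Bool := fun X => if X ∈ ({V5.C} : Finset V5) then c' else xs X
  set s₁ := (M5.intervene Xs xs).sol ()
  set s₂ := (M5.intervene ({V5.C} ∪ Xs) ys).sol ()
  have mem₂ : ∀ {X}, X ≠ V5.C → (X ∈ {V5.C} ∪ Xs ↔ X ∈ Xs) := fun hX => by simp [hX]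
  have fixed : ∀ {X}, X ≠ V5.C → X ∈ Xs → s₂ X = s₁ X := fun hX hXs =>
    (sol_intervene_of_mem ((mem₂ hX).2 hXs)).trans
      ((if_neg (by simpa using hX)).trans (sol_intervene_of_mem hXs).symm)
  have hA : s₂ V5.A = s₁ V5.A := by
    by_cases hAs : V5.A ∈ Xs
    · exact fixed (by decide) hAs
    · have hA₁ : s₁ V5.A = true := sol_intervene_of_not_mem hAs
      have hA₂ : s₂ V5.A = true := sol_intervene_of_not_mem (by simp [hAs])
      rw [hA₁, hA₂]
  have hC₂ : s₂ V5.C = c' := (sol_intervene_of_mem (by simp)).trans (if_pos (by simp))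
  have hE₁ : s₁ V5.E = (s₁ V5.F || (!(s₁ V5.A) && !(s₁ V5.D))) := sol_intervene_of_not_mem hE
  have hE₂ : s₂ V5.E = (s₂ V5.F || (!(s₂ V5.A) && !(s₂ V5.D))) :=
    sol_intervene_of_not_mem (by simp [hE])
  rw [hE₁] at h
  rw [hE₂, hA]
  by_cases hD : V5.D ∈ Xs
  · have hD₂ : s₂ V5.D = s₁ V5.D := fixed (by decide) hD
    have hF₂ : s₂ V5.F = s₁ V5.F := by
      by_cases hF : V5.F ∈ Xs
      · exact fixed (by decide) hF
      · have hF₁ : s₁ V5.F = s₁ V5.D := sol_intervene_of_not_mem hF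
        have hF₂ : s₂ V5.F = s₂ V5.D := sol_intervene_of_not_mem (by simp [hF])
        rw [hF₁, hF₂, hD₂]
    rwa [hD₂, hF₂]
  · have hD₁ : s₁ V5.D = (s₁ V5.C || s₁ V5.A) := sol_intervene_of_not_mem hD
    have hD₂ : s₂ V5.D = (s₂ V5.C || s₂ V5.A) := sol_intervene_of_not_mem (by simp [hD])
    by_cases hF : V5.F ∈ Xs
    · have hF₁ : s₁ V5.F = true := by simpa [hD₁, hC] using h
      rw [fixed (by decide) hF, hF₁, Bool.true_or]
    · have hF₂ : s₂ V5.F = s₂ V5.D := sol_intervene_of_not_mem (by simp [hF])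
      rw [hF₂, hD₂, hC₂, hA]
      cases c' <;> cases s₁ V5.A <;> rfl

/-- The CNESS definition violates Interventionism: in the model
with equations `E = F ∨ (¬A ∧ ¬D)`, `F = D`, `D = C ∨ A` and a context with `A = 1`
and `C = 1`, `C = 1` CNESS-causes `E = 1`, yet there is no intervention on a subset
of `{A, D, F}` under which `E = 1` is counterfactually dependent on `C = 1`. -/
theorem cness_violates_interventionism :
    M5.CNESSCause () V5.C true V5.E true ∧
      ∀ (Xs : Finset V5) (xs : V5 → Bool), Xs ⊆ {V5.A, V5.D, V5.F} →
        ¬ M5.CfDepGiven () Xs xs V5.C true V5.E true := by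
  refine ⟨⟨[V5.D, V5.F], M5_nessAlong_C_D_F_E, false, Finset.mem_univ _, ?_⟩, ?_⟩
  · intro p hp hness
    obtain ⟨X, hX, x, hdir⟩ := hness.exists_directNESS
    have hX' : X = V5.D ∨ X = V5.F ∨ X = V5.E := by grind
    rcases hX' with rfl | hXFE
    · exact M5_intervene_C_false_not_directNESS_D x hdir
    · exact not_directNESS_of_not_parent (Finset.mem_univ _)
        (M5_intervene_C_not_parent hXFE) hdir
  · rintro Xs xs hsub ⟨hC, hE, c', -, hne⟩
    have hEXs : V5.E ∉ Xs := fun hmem => by simpa using hsub hmem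
    exact hne (M5_intervene_C_sol_E_eq_true hEXs hC hE c')
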